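/- There do not exist odd primes a, b, d, and e satisfying a² + a + 1 = 3·d·e, b² + b + 1 = 3·d, and d ≥ e. -/

import Mathlib

/-! Modulo the prime `d`, both `a` and `b` are roots of `X² + X + 1`, so `a ≡ b (mod d)` or
`d ∣ a + b + 1`. Parity and the bounds `b < d`, `a < 2d` (the latter from `e ≤ d`) force `a = b`,
hence `e = 1`, in the first case, and `a + b + 1 = d` in the second. Since `X² + X + 1` has the
single root `1` modulo 3, the second case gives `3 ∣ d`, i.e. `9 ∣ b² + b + 1`, which never
happens. -/

theorem Nat.mod_three_eq_one_of_three_dvd_sq_add_add_one {x : ℕ} (h : 3 ∣ x ^ 2 + x + 1) :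
    x % 3 = 1 := by
  have root_eq_one : ∀ y : ZMod 3, y ^ 2 + y + 1 = 0 → y = 1 := by decide
  have := root_eq_one x (by exact_mod_cast (ZMod.natCast_eq_zero_iff _ 3).2 h)
  rwa [← ZMod.natCast_mod, ← Nat.cast_one, ZMod.natCast_eq_natCast_iff', Nat.one_mod,
    Nat.mod_mod] at this

theorem Nat.not_nine_dvd_sq_add_add_one (x : ℕ) : ¬ 9 ∣ x ^ 2 + x + 1 := by
  have no_root : ∀ y : ZMod 9, y ^ 2 + y + 1 ≠ 0 := by decide
  intro h
  exact no_root x (by exact_mod_cast (ZMod.natCast_eq_zero_iff _ 9).2 h)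

theorem eq_or_add_add_one_eq_zero_of_sq_add_add_one_eq_zero {R : Type*} [CommRing R]
    [NoZeroDivisors R] {x y : R} (hx : x ^ 2 + x + 1 = 0) (hy : y ^ 2 + y + 1 = 0) :
    x = y ∨ x + y + 1 = 0 := by
  have : (x - y) * (x + y + 1) = 0 := by linear_combination hx - hy
  exact (mul_eq_zero.1 this).imp_left sub_eq_zero.1

theorem Nat.modEq_or_dvd_add_add_one_of_dvd_sq_add_add_one {p a b : ℕ} (hp : p.Prime)
    (ha : p ∣ a ^ 2 + a + 1) (hb : p ∣ b ^ 2 + b + 1) : a ≡ b [MOD p] ∨ p ∣ a + b + 1 := by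
  have := Fact.mk hp
  have root {x : ℕ} (hx : p ∣ x ^ 2 + x + 1) : (x : ZMod p) ^ 2 + x + 1 = 0 := by
    exact_mod_cast (ZMod.natCast_eq_zero_iff _ p).2 hx
  rw [← ZMod.natCast_eq_natCast_iff, ← ZMod.natCast_eq_zero_iff]
  push_cast
  exact eq_or_add_add_one_eq_zero_of_sq_add_add_one_eq_zero (root ha) (root hb)

theorem Nat.ModEq.eq_of_odd_of_lt_two_mul {a b d : ℕ} (h : a ≡ b [MOD d]) (hd : Odd d)
    (ha : Odd a) (hb : Odd b) (ha' : a < 2 * d) (hb' : b < 2 * d) : a = b := by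
  have h2 : a ≡ b [MOD 2] := (Nat.odd_iff.1 ha).trans (Nat.odd_iff.1 hb).symm
  exact ((Nat.modEq_and_modEq_iff_modEq_mul (Nat.coprime_two_left.2 hd)).1 ⟨h2, h⟩).eq_of_lt_of_lt
    ha' hb'

theorem Nat.eq_of_dvd_of_odd_of_lt_three_mul {d n : ℕ} (h : d ∣ n) (hn : Odd n)
    (hlt : n < 3 * d) : n = d := by
  obtain ⟨k, rfl⟩ := h
  have hk : Odd k := (Nat.odd_mul.1 hn).2
  have : k < 3 := by nlinarith
  obtain ⟨j, rfl⟩ := hk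
  obtain rfl : j = 0 := by omega
  simp

/-- There do not exist odd primes `a, b, d, e` satisfying `a² + a + 1 = 3·d·e`,
`b² + b + 1 = 3·d`, and `d ≥ e`. -/
theorem unique_between_S21_and_S31 :
    ¬ ∃ a b d e : ℕ,
      a.Prime ∧ b.Prime ∧ d.Prime ∧ e.Prime ∧
      Odd a ∧ Odd b ∧ Odd d ∧ Odd e ∧
      a ^ 2 + a + 1 = 3 * d * e ∧
      b ^ 2 + b + 1 = 3 * d ∧
      d ≥ e := by
  rintro ⟨a, b, d, e, -, hb, hd, he, ha_odd, hb_odd, hd_odd, -, ha_eq, hb_eq, hed⟩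
  have hbd : b < d := by nlinarith [hb.two_le]
  have had : a < 2 * d := by nlinarith
  have ha_dvd : 3 * d ∣ a ^ 2 + a + 1 := ⟨e, ha_eq⟩
  have hb_dvd : 3 * d ∣ b ^ 2 + b + 1 := ⟨1, by rw [hb_eq, mul_one]⟩
  rcases Nat.modEq_or_dvd_add_add_one_of_dvd_sq_add_add_one hd (dvd_of_mul_left_dvd ha_dvd)
    (dvd_of_mul_left_dvd hb_dvd) with hab | hab
  · obtain rfl : a = b := hab.eq_of_odd_of_lt_two_mul hd_odd ha_odd hb_odd had (by omega)
    exact he.ne_one (by nlinarith)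
  · have hsum : a + b + 1 = d :=
      Nat.eq_of_dvd_of_odd_of_lt_three_mul hab (ha_odd.add_odd hb_odd).add_one (by omega)
    have ha3 := Nat.mod_three_eq_one_of_three_dvd_sq_add_add_one (dvd_of_mul_right_dvd ha_dvd)
    have hb3 := Nat.mod_three_eq_one_of_three_dvd_sq_add_add_one (dvd_of_mul_right_dvd hb_dvd)
    have hd3 : 3 ∣ d := by omega
    exact Nat.not_nine_dvd_sq_add_add_one b (hb_eq ▸ Nat.mul_dvd_mul_left 3 hd3)
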